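/- Let t ≥ r ≥ 3 be integers, a ≥ 2(r-1), b ≥ (a-1)! + 1, and let β be a real number with r - 1 - (r-1)(r-2)/(2(a-1)) < β < r - 1 - (r-1)(r-2)/(2a). Then there exists N such that for all n ≥ N the following holds: if G is a graph on n vertices containing t distinct vertices x_1, …, x_t each of which lies in at least n^β/(2(a+b)t) copies of K_r, and the induced subgraph G[V(G) \ {x_1, …, x_t}] contains a copy of K_{a,b}, then G contains t+1 pairwise vertex-disjoint copies of K_{a,b}. -/

import Mathlib

open Finset

/-- `F.ContainsCopy G` means `G` contains a subgraph isomorphic to `F`,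
i.e. there is an injective graph homomorphism from `F` to `G`. -/
def SimpleGraph.ContainsCopy {α β : Type*} (F : SimpleGraph α) (G : SimpleGraph β) : Prop :=
  ∃ f : F →g G, Function.Injective f

/-- `F.FreeIn G` means `G` is `F`-free. -/
def SimpleGraph.FreeIn {α β : Type*} (F : SimpleGraph α) (G : SimpleGraph β) : Prop :=
  ¬ F.ContainsCopy G

/-- `cliqueCount G r` is the number of `r`-cliques of `G` (copies of `K_r`). -/
noncomputable def cliqueCount {β : Type*} (G : SimpleGraph β) (r : ℕ) : ℕ :=
  Nat.card {s : Finset β // G.IsNClique r s}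

/-- `cliqueCountOn G r v` is the number of `r`-cliques of `G` containing the vertex `v`. -/
noncomputable def cliqueCountOn {β : Type*} (G : SimpleGraph β) (r : ℕ) (v : β) : ℕ :=
  Nat.card {s : Finset β // G.IsNClique r s ∧ v ∈ s}

/-- The generalized Turán number `ex(n, K_r, F)`: the maximum number of `r`-cliques
in an `F`-free graph on `n` vertices. -/
noncomputable def exTuran {α : Type*} (n r : ℕ) (F : SimpleGraph α) : ℕ :=
  sSup {m : ℕ | ∃ G : SimpleGraph (Fin n), F.FreeIn G ∧ m = cliqueCount G r}

/-- `multiCopies m F` is the vertex-disjoint union of `m` copies of `F`. -/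
def multiCopies {α : Type*} (m : ℕ) (F : SimpleGraph α) : SimpleGraph (Fin m × α) where
  Adj x y := x.1 = y.1 ∧ F.Adj x.2 y.2
  symm := ⟨fun _ _ h => ⟨h.1.symm, h.2.symm⟩⟩
  loopless := ⟨fun x h => F.irrefl h.2⟩

/-- The join `G ∨ H` of two vertex-disjoint graphs: their disjoint union together with
all edges between them. -/
def joinG {α β : Type*} (G : SimpleGraph α) (H : SimpleGraph β) : SimpleGraph (α ⊕ β) where
  Adj x y := match x, y with
    | Sum.inl u, Sum.inl v => G.Adj u v
    | Sum.inr u, Sum.inr v => H.Adj u v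
    | _, _ => True
  symm := ⟨by rintro (u|u) (v|v) h <;> first | exact h.symm | trivial⟩
  loopless := ⟨by rintro (u|u) h <;> exact absurd h (by simp)⟩

/-!
Alon–Shikhelman: a set `A` spanning no `K_{s,t}` spans `O(|A| ^ (m - m (m - 1) / (2 s)))`
copies of `K_m`. By induction on `m`, each `(m + 1)`-clique is counted through the
neighbourhoods `A ∩ N(v)` of its vertices, which span no `K_{s-1,t}`; Hölder's inequality reduces
`∑ |A ∩ N(v)| ^ γ` to the moment `∑ |A ∩ N(v)| ^ s`, which is `O(|A| ^ s)` because every `s`-set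
has fewer than `t` common neighbours in `A`.

For `m = r - 1` and `s = a - 1` the exponent is the lower bound on `β`. Hence, for large `n`, a
vertex `x` in `n ^ β / (2 (a + b) t)` copies of `K_r` has a `K_{a-1,b}` in its neighbourhood even
after removing any bounded set `U`: the `(r - 1)`-cliques of `N(x)` are controlled by smaller
cliques of `N(x) \ U` together with their traces on `U`. Adding `x` to the small side gives a
`K_{a,b}` through `x`. Choosing these greedily for `x_1, …, x_t`, each avoiding the given copy, all
the `x_j` and the copies already chosen, yields `t + 1` disjoint copies.
-/

theorem Nat.pow_le_pow_mul_descFactorial_add_one (d s : ℕ) :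
    d ^ s ≤ s ^ s * (d.descFactorial s + 1) := by
  rcases Nat.eq_zero_or_pos s with rfl | hs
  · simp
  rcases lt_or_ge d s with hds | hsd
  · calc d ^ s ≤ s ^ s := Nat.pow_le_pow_left hds.le s
      _ ≤ s ^ s * (d.descFactorial s + 1) := Nat.le_mul_of_pos_right _ (Nat.succ_pos _)
  · have hd : d ≤ s * (d + 1 - s) := by
      obtain ⟨e, rfl⟩ := Nat.exists_eq_add_of_le hsd
      rw [show s + e + 1 - s = e + 1 by omega]
      nlinarith
    calc d ^ s ≤ (s * (d + 1 - s)) ^ s := Nat.pow_le_pow_left hd s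
      _ = s ^ s * (d + 1 - s) ^ s := Nat.mul_pow _ _ _
      _ ≤ s ^ s * (d.descFactorial s + 1) :=
        Nat.mul_le_mul_left _ ((Nat.pow_sub_le_descFactorial d s).trans (Nat.le_succ _))

noncomputable def cliqueExponent (m s : ℕ) : ℝ := m - m * (m - 1) / (2 * s)

lemma cliqueExponent_zero_left (s : ℕ) : cliqueExponent 0 s = 0 := by
  simp [cliqueExponent]

lemma cliqueExponent_le_self (m s : ℕ) : cliqueExponent m s ≤ m := by
  have : (0 : ℝ) ≤ m * (m - 1) := by
    rcases Nat.eq_zero_or_pos m with rfl | hm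
    · simp
    · have : (1 : ℝ) ≤ m := by exact_mod_cast hm
      nlinarith
  unfold cliqueExponent
  linarith [div_nonneg this (by positivity : (0 : ℝ) ≤ 2 * s)]

lemma cliqueExponent_mono {j m s : ℕ} (hjm : j ≤ m) (hms : m ≤ s) :
    cliqueExponent j s ≤ cliqueExponent m s := by
  rcases Nat.eq_zero_or_pos s with rfl | hs
  · simp [show m = 0 by omega, show j = 0 by omega]
  have hjm' : (j : ℝ) ≤ m := by exact_mod_cast hjm
  have hms' : (m : ℝ) ≤ s := by exact_mod_cast hms
  have hs' : (0 : ℝ) < 2 * s := by positivity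
  have key : (m : ℝ) * (m - 1) / (2 * s) - j * (j - 1) / (2 * s) ≤ m - j := by
    rw [← sub_div, div_le_iff₀ hs']
    nlinarith
  unfold cliqueExponent
  linarith

lemma cliqueExponent_nonneg {m s : ℕ} (hms : m ≤ s) : 0 ≤ cliqueExponent m s :=
  cliqueExponent_zero_left s ▸ cliqueExponent_mono (Nat.zero_le m) hms

lemma cliqueExponent_succ_succ {m s : ℕ} (hms : m ≤ s) :
    cliqueExponent m s + 1 - cliqueExponent m s / (s + 1) = cliqueExponent (m + 1) (s + 1) := by
  rcases Nat.eq_zero_or_pos s with rfl | hs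
  · obtain rfl : m = 0 := by omega
    simp [cliqueExponent]
  have hs' : (s : ℝ) ≠ 0 := by positivity
  unfold cliqueExponent
  push_cast
  field_simp
  ring

lemma sum_rpow_le_of_sum_rpow_le {ι : Type*} (A : Finset ι) {f : ι → ℝ}
    (hf : ∀ i ∈ A, 0 ≤ f i) {p γ K : ℝ} (hγ : 0 ≤ γ) (hγp : γ ≤ p) (hK : 1 ≤ K)
    (h : ∑ i ∈ A, f i ^ p ≤ K * #A ^ p) :
    ∑ i ∈ A, f i ^ γ ≤ K * #A ^ (γ + 1 - γ / p) := by
  rcases A.eq_empty_or_nonempty with rfl | hA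
  · simpa using mul_nonneg (zero_le_one.trans hK) (Real.rpow_nonneg le_rfl _)
  have hn : (0 : ℝ) < #A := by exact_mod_cast hA.card_pos
  rcases hγ.eq_or_lt with rfl | hγ
  · simp only [Real.rpow_zero, sum_const, nsmul_eq_mul, mul_one, zero_add, zero_div, sub_zero,
      Real.rpow_one]
    nlinarith
  have hp : 0 < p := hγ.trans_le hγp
  have hq : 1 ≤ p / γ := (one_le_div hγ).2 hγp
  have hmean := Real.rpow_sum_le_const_mul_sum_rpow_of_nonneg (s := A) (f := (f · ^ γ)) hq
    fun i hi => Real.rpow_nonneg (hf i hi) γ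
  have hpow : ∑ i ∈ A, (f i ^ γ) ^ (p / γ) = ∑ i ∈ A, f i ^ p :=
    sum_congr rfl fun i hi => by rw [← Real.rpow_mul (hf i hi), mul_div_cancel₀ _ hγ.ne']
  have hsum : 0 ≤ ∑ i ∈ A, f i ^ γ := sum_nonneg fun i hi => Real.rpow_nonneg (hf i hi) γ
  calc ∑ i ∈ A, f i ^ γ = ((∑ i ∈ A, f i ^ γ) ^ (p / γ)) ^ (γ / p) := by
        rw [← Real.rpow_mul hsum, div_mul_div_cancel₀ hγ.ne', div_self hp.ne', Real.rpow_one]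
    _ ≤ ((#A : ℝ) ^ (p / γ - 1) * (K * #A ^ p)) ^ (γ / p) := by
        rw [hpow] at hmean
        gcongr
        exact hmean.trans (by gcongr)
    _ = K ^ (γ / p) * #A ^ (γ + 1 - γ / p) := by
        rw [Real.mul_rpow (by positivity) (by positivity), Real.mul_rpow (by positivity)
          (by positivity), ← Real.rpow_mul hn.le, ← Real.rpow_mul hn.le, mul_left_comm,
          ← Real.rpow_add hn]
        congr 2
        field_simp
        ring
    _ ≤ K * #A ^ (γ + 1 - γ / p) := by
        gcongr
        simpa using Real.rpow_le_rpow_of_exponent_le hK ((div_le_one hp).2 hγp)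

lemma exists_nat_forall_mul_rpow_lt_rpow {γ β : ℝ} (hγβ : γ < β) (M : ℝ) :
    ∃ N : ℕ, 0 < N ∧ ∀ n : ℕ, N ≤ n → M * (n : ℝ) ^ γ < (n : ℝ) ^ β := by
  have htend : Filter.Tendsto (fun n : ℕ => (n : ℝ) ^ (β - γ)) Filter.atTop Filter.atTop :=
    (tendsto_rpow_atTop (sub_pos.2 hγβ)).comp tendsto_natCast_atTop_atTop
  obtain ⟨N, hN⟩ := Filter.eventually_atTop.1 (htend.eventually_gt_atTop M)
  refine ⟨N + 1, N.succ_pos, fun n hn => ?_⟩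
  have hn : (0 : ℝ) < n := by exact_mod_cast (N.succ_pos.trans_le hn)
  calc M * (n : ℝ) ^ γ < (n : ℝ) ^ (β - γ) * (n : ℝ) ^ γ :=
        mul_lt_mul_of_pos_right (hN n (by omega)) (Real.rpow_pos_of_pos hn γ)
    _ = (n : ℝ) ^ β := by rw [← Real.rpow_add hn, sub_add_cancel]

lemma Finset.exists_pairwise_disjoint_of_forall_exists_disjoint {ι V : Type*} [Fintype ι]
    [DecidableEq V] (P : ι → Finset V → Prop) (k : ℕ) (B : Finset V)
    (h : ∀ i (U : Finset V), #U ≤ #B + Fintype.card ι * k →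
      ∃ F, P i F ∧ #F ≤ k ∧ Disjoint F U) :
    ∃ F : ι → Finset V, (∀ i, P i (F i) ∧ Disjoint (F i) B) ∧
      Pairwise fun i j => Disjoint (F i) (F j) := by
  classical
  suffices ∀ s : Finset ι, ∃ F : ι → Finset V,
      (∀ i ∈ s, P i (F i) ∧ #(F i) ≤ k ∧ Disjoint (F i) B) ∧
        (s : Set ι).PairwiseDisjoint F by
    obtain ⟨F, hF, hdisj⟩ := this univ
    refine ⟨F, fun i => ⟨(hF i (mem_univ i)).1, (hF i (mem_univ i)).2.2⟩, ?_⟩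
    simpa [Set.PairwiseDisjoint, Set.pairwise_univ] using hdisj
  intro s
  induction s using Finset.induction_on with
  | empty => exact ⟨fun _ => ∅, by simp, by simp⟩
  | insert i s hi ih =>
    obtain ⟨F, hF, hdisj⟩ := ih
    have hU : #(B ∪ s.biUnion F) ≤ #B + Fintype.card ι * k := by
      calc #(B ∪ s.biUnion F) ≤ #B + #s * k :=
            (card_union_le _ _).trans (Nat.add_le_add_left (card_biUnion_le_card_mul _ _ _
              fun j hj => (hF j hj).2.1) _)
        _ ≤ #B + Fintype.card ι * k := by gcongr; exact card_le_univ s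
    obtain ⟨Fi, hPi, hFi, hFiU⟩ := h i _ hU
    have hupdate : ∀ j ∈ s, Function.update F i Fi j = F j :=
      fun j hj => Function.update_of_ne (ne_of_mem_of_not_mem hj hi) _ _
    refine ⟨Function.update F i Fi, fun j hj => ?_, ?_⟩
    · rcases mem_insert.1 hj with rfl | hj
      · simpa using ⟨hPi, hFi, disjoint_of_subset_right subset_union_left hFiU⟩
      · simpa [hupdate j hj] using hF j hj
    · rw [coe_insert]
      refine (hdisj.mono_on fun j hj => (hupdate j hj).le).insert_of_notMem (mod_cast hi)
        fun j hj => ?_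
      rw [Function.update_self, hupdate j hj]
      exact hFiU.mono_right (subset_union_right.trans' (subset_biUnion_of_mem F hj))

universe u

namespace SimpleGraph

def HasBicliqueIn {V : Type*} (G : SimpleGraph V) (s t : ℕ) (A : Finset V) : Prop :=
  ∃ S T : Finset V, S ⊆ A ∧ T ⊆ A ∧ #S = s ∧ #T = t ∧ G.IsCompleteBetween S T

section Counting

variable {V : Type*} [Fintype V] [DecidableEq V] {G : SimpleGraph V} [DecidableRel G.Adj]

variable (G) in
def cliquesIn (m : ℕ) (A : Finset V) : Finset (Finset V) :=
  (G.cliqueFinset m).filter (· ⊆ A)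

@[simp]
lemma mem_cliquesIn {m : ℕ} {A S : Finset V} :
    S ∈ G.cliquesIn m A ↔ G.IsNClique m S ∧ S ⊆ A := by
  simp [cliquesIn]

lemma card_cliquesIn_zero_le_one (A : Finset V) : #(G.cliquesIn 0 A) ≤ 1 :=
  card_le_one.2 fun S hS S' hS' => by
    simp only [mem_cliquesIn, isNClique_zero] at hS hS'
    rw [hS.1, hS'.1]

lemma card_filter_mem_cliquesIn_succ_le (m : ℕ) (A : Finset V) (v : V) :
    #((G.cliquesIn (m + 1) A).filter (v ∈ ·)) ≤
      #(G.cliquesIn m (A ∩ G.neighborFinset v)) := by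
  refine card_le_card_of_injOn (·.erase v) (fun S hS => ?_) fun S hS S' hS' => ?_
  · simp only [coe_filter, mem_cliquesIn, Set.mem_ofPred_eq] at hS
    obtain ⟨⟨hclique, hSA⟩, hv⟩ := hS
    refine mem_cliquesIn.2 ⟨hclique.erase_of_mem hv, fun w hw => ?_⟩
    obtain ⟨hwv, hwS⟩ := mem_erase.1 hw
    exact mem_inter.2
      ⟨hSA hwS, (mem_neighborFinset _ _ _).2 (hclique.1 hv hwS (Ne.symm hwv))⟩
  · exact erase_injOn' v (mem_filter.1 hS).2 (mem_filter.1 hS').2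

lemma cliqueCountOn_succ_le (m : ℕ) (v : V) :
    cliqueCountOn G (m + 1) v ≤ #(G.cliquesIn m (G.neighborFinset v)) := by
  have hcount : cliqueCountOn G (m + 1) v = #((G.cliquesIn (m + 1) univ).filter (v ∈ ·)) := by
    rw [cliqueCountOn, Nat.card_eq_fintype_card, Fintype.card_subtype]
    simp [cliquesIn, cliqueFinset, filter_filter]
  simpa [hcount] using card_filter_mem_cliquesIn_succ_le m univ v

lemma succ_mul_card_cliquesIn_succ_le (m : ℕ) (A : Finset V) :
    (m + 1) * #(G.cliquesIn (m + 1) A) ≤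
      ∑ v ∈ A, #(G.cliquesIn m (A ∩ G.neighborFinset v)) := by
  have hdouble := sum_card_bipartiteAbove_eq_sum_card_bipartiteBelow
    (s := G.cliquesIn (m + 1) A) (t := A) (r := fun S v => v ∈ S)
  have hclique : ∀ S ∈ G.cliquesIn (m + 1) A,
      #(A.bipartiteAbove (fun S v => v ∈ S) S) = m + 1 := fun S hS => by
    obtain ⟨hclique, hSA⟩ := mem_cliquesIn.1 hS
    rw [bipartiteAbove, filter_mem_eq_inter, inter_eq_right.2 hSA, hclique.2]
  rw [sum_congr rfl hclique, sum_const, smul_eq_mul, mul_comm] at hdouble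
  rw [hdouble]
  exact sum_le_sum fun v _ => card_filter_mem_cliquesIn_succ_le m A v

lemma card_cliquesIn_le_sum_powerset (m : ℕ) (B U : Finset V) :
    #(G.cliquesIn m B) ≤ ∑ W ∈ U.powerset, #(G.cliquesIn (m - #W) (B \ U)) := by
  rw [← card_sigma]
  refine card_le_card_of_injOn (fun S => ⟨S ∩ U, S \ U⟩) (fun S hS => ?_)
    fun S hS S' hS' h => ?_
  · obtain ⟨hclique, hSB⟩ := mem_cliquesIn.1 hS
    refine mem_sigma.2
      ⟨mem_powerset.2 inter_subset_right, mem_cliquesIn.2 ⟨⟨?_, ?_⟩, ?_⟩⟩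
    · exact hclique.1.subset (by simp)
    · have := card_inter_add_card_sdiff S U
      have := hclique.2
      change #(S \ U) = m - #(S ∩ U)
      omega
    · exact sdiff_subset_sdiff hSB subset_rfl
  · simp only [Sigma.mk.inj_iff, heq_eq_eq] at h
    rw [← sdiff_union_inter S U, ← sdiff_union_inter S' U, h.1, h.2]

lemma HasBicliqueIn.of_inter_neighborFinset {s t : ℕ} {A : Finset V} {v : V} (hv : v ∈ A)
    (h : G.HasBicliqueIn s t (A ∩ G.neighborFinset v)) : G.HasBicliqueIn (s + 1) t A := by
  obtain ⟨S, T, hS, hT, hSc, hTc, hST⟩ := h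
  have hvS : v ∉ S := fun hvS =>
    G.irrefl ((mem_neighborFinset _ _ _).1 (mem_inter.1 (hS hvS)).2)
  refine ⟨insert v S, T, insert_subset hv (hS.trans inter_subset_left),
    hT.trans inter_subset_left, by rw [card_insert_of_notMem hvS, hSc], hTc, ?_⟩
  intro u hu w hw
  rcases mem_insert.1 hu with rfl | hu
  · exact (mem_neighborFinset _ _ _).1 (mem_inter.1 (hT hw)).2
  · exact hST hu hw

end Counting

section Biclique

variable {V : Type*} [Fintype V] [DecidableEq V] {G : SimpleGraph V} [DecidableRel G.Adj]
  {s t : ℕ} {A : Finset V}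

lemma card_filter_subset_neighborFinset_lt (h : ¬G.HasBicliqueIn s t A) {S : Finset V}
    (hSA : S ⊆ A) (hS : #S = s) : #(A.filter (S ⊆ G.neighborFinset ·)) < t := by
  by_contra! ht
  obtain ⟨T, hT, hTc⟩ := exists_subset_card_eq ht
  refine h ⟨S, T, hSA, hT.trans (filter_subset _ _), hS, hTc, fun u hu w hw => ?_⟩
  exact ((mem_neighborFinset _ _ _).1 ((mem_filter.1 (hT hw)).2 hu)).symm

lemma sum_choose_card_inter_neighborFinset_le (h : ¬G.HasBicliqueIn s t A) :
    ∑ v ∈ A, (#(A ∩ G.neighborFinset v)).choose s ≤ (#A).choose s * t := by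
  have hdouble := sum_card_bipartiteAbove_eq_sum_card_bipartiteBelow
    (s := A) (t := A.powersetCard s) (r := fun v S => S ⊆ G.neighborFinset v)
  have habove : ∀ v, (A.powersetCard s).bipartiteAbove (fun v S => S ⊆ G.neighborFinset v) v =
      (A ∩ G.neighborFinset v).powersetCard s := fun v => by
    ext S
    simp [bipartiteAbove, subset_inter_iff, and_assoc, and_comm]
  simp only [habove, card_powersetCard] at hdouble
  rw [hdouble, ← card_powersetCard s A, ← smul_eq_mul, ← sum_const]
  refine sum_le_sum fun S hS => (card_filter_subset_neighborFinset_lt h ?_ ?_).le <;>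
    simp_all [mem_powersetCard]

lemma sum_pow_card_inter_neighborFinset_le (h : ¬G.HasBicliqueIn s t A) (hs : s ≠ 0) :
    ∑ v ∈ A, #(A ∩ G.neighborFinset v) ^ s ≤ s ^ s * (s.factorial * t + 1) * #A ^ s := by
  calc ∑ v ∈ A, #(A ∩ G.neighborFinset v) ^ s
      ≤ ∑ v ∈ A, s ^ s * (s.factorial * (#(A ∩ G.neighborFinset v)).choose s + 1) := by
        gcongr with v
        rw [← Nat.descFactorial_eq_factorial_mul_choose]
        exact Nat.pow_le_pow_mul_descFactorial_add_one _ _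
    _ = s ^ s * (s.factorial * ∑ v ∈ A, (#(A ∩ G.neighborFinset v)).choose s + #A) := by
        rw [← mul_sum, sum_add_distrib, mul_sum, sum_const, smul_eq_mul, mul_one]
    _ ≤ s ^ s * (s.factorial * ((#A).choose s * t) + #A) := by
        gcongr
        exact sum_choose_card_inter_neighborFinset_le h
    _ ≤ s ^ s * (s.factorial * (#A ^ s * t) + #A ^ s) := by
        gcongr
        · exact Nat.choose_le_pow _ _
        · exact Nat.le_self_pow hs _
    _ = s ^ s * (s.factorial * t + 1) * #A ^ s := by ring

lemma card_cliquesIn_succ_le {m s t : ℕ} {A : Finset V} (h : ¬G.HasBicliqueIn (s + 1) t A)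
    {C γ : ℝ} (hC : 0 ≤ C) (hγ : 0 ≤ γ) (hγs : γ ≤ s + 1)
    (hnbr : ∀ v ∈ A, (#(G.cliquesIn m (A ∩ G.neighborFinset v)) : ℝ) ≤
      C * #(A ∩ G.neighborFinset v) ^ γ) :
    (#(G.cliquesIn (m + 1) A) : ℝ) ≤
      C * ((s + 1) ^ (s + 1) * ((s + 1).factorial * t + 1) : ℕ) *
        #A ^ (γ + 1 - γ / (s + 1)) := by
  set K : ℕ := (s + 1) ^ (s + 1) * ((s + 1).factorial * t + 1)
  have hK : (1 : ℝ) ≤ K := by exact_mod_cast Nat.one_le_iff_ne_zero.2 (by positivity)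
  have hmoment : ∑ v ∈ A, (#(A ∩ G.neighborFinset v) : ℝ) ^ ((s + 1 : ℕ) : ℝ) ≤
      K * (#A : ℝ) ^ ((s + 1 : ℕ) : ℝ) := by
    simp only [Real.rpow_natCast]
    exact_mod_cast sum_pow_card_inter_neighborFinset_le h s.succ_ne_zero
  have hholder := sum_rpow_le_of_sum_rpow_le A (fun v _ => Nat.cast_nonneg _) hγ
    (by push_cast; exact hγs) hK hmoment
  push_cast at hholder
  calc (#(G.cliquesIn (m + 1) A) : ℝ) ≤ (m + 1 : ℕ) * #(G.cliquesIn (m + 1) A) :=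
        le_mul_of_one_le_left (Nat.cast_nonneg _) (by exact_mod_cast m.succ_pos)
    _ ≤ ∑ v ∈ A, (#(G.cliquesIn m (A ∩ G.neighborFinset v)) : ℝ) := by
        exact_mod_cast succ_mul_card_cliquesIn_succ_le m A
    _ ≤ ∑ v ∈ A, C * #(A ∩ G.neighborFinset v) ^ γ := sum_le_sum hnbr
    _ ≤ C * K * #A ^ (γ + 1 - γ / (s + 1)) := by
        rw [← mul_sum, mul_assoc]
        exact mul_le_mul_of_nonneg_left hholder hC

end Biclique

theorem exists_card_cliquesIn_le_mul_rpow (t s : ℕ) :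
    ∃ C : ℝ, 1 ≤ C ∧ ∀ m ≤ s, ∀ {V : Type u} [Fintype V] [DecidableEq V]
      (G : SimpleGraph V) [DecidableRel G.Adj] (A : Finset V), ¬G.HasBicliqueIn s t A →
      (#(G.cliquesIn m A) : ℝ) ≤ C * #A ^ cliqueExponent m s := by
  have hzero : ∀ {C : ℝ}, 1 ≤ C → ∀ s {V : Type u} [Fintype V] [DecidableEq V]
      (G : SimpleGraph V) [DecidableRel G.Adj] (A : Finset V),
      (#(G.cliquesIn 0 A) : ℝ) ≤ C * #A ^ cliqueExponent 0 s := fun hC s V _ _ G _ A => by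
    have := card_cliquesIn_zero_le_one (G := G) A
    simp only [cliqueExponent_zero_left, Real.rpow_zero, mul_one]
    exact le_trans (by exact_mod_cast this) hC
  induction s with
  | zero =>
    refine ⟨1, le_rfl, fun m hm V _ _ G _ A _ => ?_⟩
    obtain rfl : m = 0 := by omega
    exact hzero le_rfl 0 G A
  | succ s ih =>
    obtain ⟨C, hC, hbound⟩ := ih
    set K : ℕ := (s + 1) ^ (s + 1) * ((s + 1).factorial * t + 1)
    have hK : (1 : ℝ) ≤ K := by exact_mod_cast Nat.one_le_iff_ne_zero.2 (by positivity)
    refine ⟨C * K, one_le_mul_of_one_le_of_one_le hC hK, fun m hm V _ _ G _ A hA => ?_⟩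
    cases m with
    | zero => exact hzero (one_le_mul_of_one_le_of_one_le hC hK) _ G A
    | succ m =>
      have hms : m ≤ s := by omega
      rw [← cliqueExponent_succ_succ hms]
      refine card_cliquesIn_succ_le hA (by linarith) (cliqueExponent_nonneg hms) ?_
        fun v hv => hbound m hms G _ fun hB => hA (hB.of_inter_neighborFinset hv)
      linarith [cliqueExponent_le_self m s, (Nat.cast_le (α := ℝ)).2 hms]

theorem exists_hasBicliqueIn_neighborFinset_sdiff (t u : ℕ) {m s : ℕ} (hms : m ≤ s)
    {β D : ℝ} (hβ : cliqueExponent m s < β) (hD : 0 < D) :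
    ∃ N : ℕ, ∀ {V : Type u} [Fintype V] [DecidableEq V] (G : SimpleGraph V)
      [DecidableRel G.Adj] (v : V) (U : Finset V), N ≤ Fintype.card V → #U ≤ u →
      (Fintype.card V : ℝ) ^ β / D ≤ cliqueCountOn G (m + 1) v →
      G.HasBicliqueIn s t (G.neighborFinset v \ U) := by
  obtain ⟨C, hC, hbound⟩ := exists_card_cliquesIn_le_mul_rpow.{u} t s
  obtain ⟨N, hN0, hN⟩ := exists_nat_forall_mul_rpow_lt_rpow hβ (D * 2 ^ u * C)
  refine ⟨N, fun {V} _ _ G _ v U hn hU hcount => ?_⟩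
  by_contra hfree
  set n := Fintype.card V
  have hn1 : (1 : ℝ) ≤ n := by exact_mod_cast hN0.trans_le hn
  have hterm : ∀ W ∈ U.powerset, (#(G.cliquesIn (m - #W) (G.neighborFinset v \ U)) : ℝ) ≤
      C * n ^ cliqueExponent m s := fun W _ => by
    refine (hbound _ (by omega) G _ hfree).trans
      (mul_le_mul_of_nonneg_left ?_ (by linarith))
    calc (#(G.neighborFinset v \ U) : ℝ) ^ cliqueExponent (m - #W) s
        ≤ (n : ℝ) ^ cliqueExponent (m - #W) s :=
          Real.rpow_le_rpow (Nat.cast_nonneg _) (by exact_mod_cast card_le_univ _)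
            (cliqueExponent_nonneg (by omega))
      _ ≤ (n : ℝ) ^ cliqueExponent m s :=
          Real.rpow_le_rpow_of_exponent_le hn1 (cliqueExponent_mono (by omega) hms)
  have hcount_le : (cliqueCountOn G (m + 1) v : ℝ) ≤ 2 ^ u * C * n ^ cliqueExponent m s := by
    calc (cliqueCountOn G (m + 1) v : ℝ)
        ≤ ∑ W ∈ U.powerset, (#(G.cliquesIn (m - #W) (G.neighborFinset v \ U)) : ℝ) := by
          exact_mod_cast
            (cliqueCountOn_succ_le m v).trans (card_cliquesIn_le_sum_powerset _ _ _)
      _ ≤ ∑ W ∈ U.powerset, C * (n : ℝ) ^ cliqueExponent m s := sum_le_sum hterm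
      _ = 2 ^ #U * (C * n ^ cliqueExponent m s) := by
          rw [sum_const, card_powerset, nsmul_eq_mul]; push_cast; ring
      _ ≤ 2 ^ u * C * n ^ cliqueExponent m s := by
          rw [← mul_assoc]
          gcongr
          · exact one_le_two
  rw [div_le_iff₀ hD] at hcount
  have := hN n hn
  nlinarith

lemma containsCopy_iff_isContained {α β : Type*} {F : SimpleGraph α} {G : SimpleGraph β} :
    F.ContainsCopy G ↔ F ⊑ G :=
  ⟨fun ⟨f, hf⟩ => ⟨⟨f, hf⟩⟩, fun ⟨c⟩ => ⟨c.toHom, c.injective⟩⟩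

lemma multiCopies_isContained {α β : Type*} {F : SimpleGraph α} {G : SimpleGraph β} {k : ℕ}
    (c : Fin k → Copy F G)
    (h : Pairwise fun i j => Disjoint (Set.range (c i)) (Set.range (c j))) :
    multiCopies k F ⊑ G := by
  refine ⟨⟨⟨fun z => c z.1 z.2, fun {z w} hzw => ?_⟩, fun z w hzw => ?_⟩⟩
  · obtain ⟨i, p⟩ := z
    obtain ⟨j, q⟩ := w
    obtain ⟨rfl, hpq⟩ := hzw
    exact (c i).toHom.map_adj hpq
  · obtain ⟨i, p⟩ := z
    obtain ⟨j, q⟩ := w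
    obtain rfl : i = j := by
      by_contra hij
      exact Set.disjoint_left.1 (h hij) ⟨p, rfl⟩ ⟨q, hzw.symm⟩
    have hpq : c i p = c i q := hzw
    rw [(c i).injective hpq]

lemma multiCopies_succ_isContained {α β : Type*} {F : SimpleGraph α} {G : SimpleGraph β}
    {k : ℕ} (c₀ : Copy F G) (c : Fin k → Copy F G)
    (h₀ : ∀ i, Disjoint (Set.range c₀) (Set.range (c i)))
    (h : Pairwise fun i j => Disjoint (Set.range (c i)) (Set.range (c j))) :
    multiCopies (k + 1) F ⊑ G := by
  refine multiCopies_isContained (Fin.cons c₀ c)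
    (pairwise_fin_succ_iff.2 ⟨fun i => (h₀ i).symm, h₀, by simpa using h⟩)

lemma exists_copy_completeBipartiteGraph_insert {V : Type*} {G : SimpleGraph V} [DecidableEq V]
    {a b : ℕ} {x : V} {S T : Finset V} (hS : #S + 1 = a) (hT : #T = b)
    (hST : G.IsCompleteBetween S T) (hx : ∀ w ∈ S ∪ T, G.Adj x w) :
    ∃ c : Copy (completeBipartiteGraph (Fin a) (Fin b)) G,
      Set.range c ⊆ ↑(insert x (S ∪ T)) := by
  have hxS : x ∉ S := fun h => G.irrefl (hx x (mem_union_left _ h))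
  have hcomplete : G.IsCompleteBetween ↑(insert x S) ↑T := by
    intro u hu w hw
    rcases mem_insert.1 hu with rfl | hu
    · exact hx w (mem_union_right _ hw)
    · exact hST hu hw
  refine ⟨Copy.completeBipartiteGraph (insert x S) T (by simp [card_insert_of_notMem hxS, hS])
    (by simp [hT]) hcomplete, ?_⟩
  rintro _ ⟨z | z, rfl⟩
  · simp only [Copy.completeBipartiteGraph, coe_insert, coe_union]
    exact (mem_insert.1 (Subtype.prop _)).imp id Or.inl
  · simp [Copy.completeBipartiteGraph]

lemma exists_copies_completeBipartiteGraph_through {ι V : Type*} [Fintype ι] [Fintype V]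
    [DecidableEq V] {G : SimpleGraph V} [DecidableRel G.Adj] {a b : ℕ} (ha : a ≠ 0)
    {x : ι → V} (hx : Function.Injective x) {B : Finset V} (hxB : ∀ i, x i ∈ B)
    (h : ∀ i (U : Finset V), #U ≤ #B + Fintype.card ι * (a - 1 + b) →
      G.HasBicliqueIn (a - 1) b (G.neighborFinset (x i) \ U)) :
    ∃ c : ι → Copy (completeBipartiteGraph (Fin a) (Fin b)) G,
      (∀ i, ∀ y ∈ Set.range (c i), y ∈ B → y = x i) ∧
      Pairwise fun i j => Disjoint (Set.range (c i)) (Set.range (c j)) := by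
  obtain ⟨F, hF, hdisj⟩ := exists_pairwise_disjoint_of_forall_exists_disjoint
    (fun i F => ∃ S T, F = S ∪ T ∧ #S = a - 1 ∧ #T = b ∧ G.IsCompleteBetween S T ∧
      ∀ w ∈ F, G.Adj (x i) w) (a - 1 + b) B fun i U hU => by
    obtain ⟨S, T, hS, hT, hSc, hTc, hST⟩ := h i U hU
    have hSTU : S ∪ T ⊆ G.neighborFinset (x i) \ U := union_subset hS hT
    refine ⟨S ∪ T, ⟨S, T, rfl, hSc, hTc, hST, fun w hw => ?_⟩,
      (card_union_le _ _).trans (by omega), sdiff_disjoint.mono_left hSTU⟩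
    exact (mem_neighborFinset _ _ _).1 (mem_sdiff.1 (hSTU hw)).1
  choose S T hFST hSc hTc hST hadj using fun i => (hF i).1
  have hcopy : ∀ i, ∃ c : Copy (completeBipartiteGraph (Fin a) (Fin b)) G,
      Set.range c ⊆ ↑(insert (x i) (F i)) := fun i => by
    rw [hFST i]
    exact exists_copy_completeBipartiteGraph_insert (by rw [hSc i]; omega) (hTc i) (hST i)
      (hFST i ▸ hadj i)
  choose c hc using hcopy
  have hxF : ∀ i j, x i ∉ F j := fun i j hxi => Finset.disjoint_left.1 (hF j).2 hxi (hxB i)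
  refine ⟨c, fun i y hy hyB => ?_, fun i j hij => ?_⟩
  · rcases mem_insert.1 (hc i hy) with rfl | hyF
    · rfl
    · exact absurd hyB (Finset.disjoint_left.1 (hF i).2 hyF)
  · refine (disjoint_coe.2 ?_).mono (hc i) (hc j)
    simp only [disjoint_insert_left, disjoint_insert_right, mem_insert, hxF, or_false,
      not_false_eq_true, true_and]
    exact ⟨hx.ne hij.symm, hdisj hij⟩

end SimpleGraph

theorem stmt13_general (t r a b : ℕ) (htr : r ≤ t) (hr : 3 ≤ r) (ha : 2 * (r - 1) ≤ a)
    (β : ℝ)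
    (hβ1 : (r : ℝ) - 1 - ((r : ℝ) - 1) * ((r : ℝ) - 2) / (2 * ((a : ℝ) - 1)) < β) :
    ∃ N : ℕ, ∀ n : ℕ, N ≤ n → ∀ (V : Type) (_ : Fintype V), ∀ G : SimpleGraph V,
      Fintype.card V = n →
      ∀ x : Fin t → V, Function.Injective x →
      (∀ i, (n : ℝ) ^ β / (2 * ((a : ℝ) + (b : ℝ)) * (t : ℝ)) ≤ (cliqueCountOn G r (x i) : ℝ)) →
      (completeBipartiteGraph (Fin a) (Fin b)).ContainsCopy (G.induce ((Set.range x)ᶜ)) →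
      (multiCopies (t + 1) (completeBipartiteGraph (Fin a) (Fin b))).ContainsCopy G := by
  classical
  have hβ : cliqueExponent (r - 1) (a - 1) < β := by
    convert hβ1 using 1
    unfold cliqueExponent
    push_cast [Nat.cast_sub (by omega : 1 ≤ r), Nat.cast_sub (by omega : 1 ≤ a)]
    ring
  have hD : 0 < 2 * ((a : ℝ) + b) * t := by
    have : (0 : ℝ) < a := by exact_mod_cast (by omega : 0 < a)
    have : (0 : ℝ) < t := by exact_mod_cast (by omega : 0 < t)
    positivity
  obtain ⟨N, hN⟩ := SimpleGraph.exists_hasBicliqueIn_neighborFinset_sdiff b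
    (a + b + t + t * (a - 1 + b)) (m := r - 1) (s := a - 1) (by omega) hβ hD
  refine ⟨N, fun n hn V _ G hV x hx hcount hcopy => ?_⟩
  obtain ⟨e⟩ := SimpleGraph.containsCopy_iff_isContained.1 hcopy
  set c₀ := (SimpleGraph.Copy.induce G _).comp e
  set B := univ.image c₀ ∪ univ.image x
  have hB : #B ≤ a + b + t := by
    refine (card_union_le _ _).trans (Nat.add_le_add (card_image_le.trans ?_)
      (card_image_le.trans ?_)) <;> simp
  obtain ⟨c, hcB, hpair⟩ := SimpleGraph.exists_copies_completeBipartiteGraph_through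
    (a := a) (b := b) (by omega) hx (B := B)
    (fun i => mem_union_right _ (mem_image_of_mem x (mem_univ i))) fun i U hU => by
      refine hN G (x i) U (hV ▸ hn) (by rw [Fintype.card_fin] at hU; omega) ?_
      rw [Nat.sub_add_cancel (by omega), hV]
      exact hcount i
  refine SimpleGraph.containsCopy_iff_isContained.2
    (SimpleGraph.multiCopies_succ_isContained c₀ c (fun i => ?_) hpair)
  refine Set.disjoint_left.2 fun y hy₀ hy => ?_
  obtain ⟨z, rfl⟩ := hy₀
  exact (e z).2 ⟨i, (hcB i _ hy (mem_union_left _ (mem_image_of_mem _ (mem_univ z)))).symm⟩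

/-- `t` heavy vertices plus a `K_{a,b}` outside them give `t+1` disjoint
copies of `K_{a,b}`. -/
theorem stmt13 (t r a b : ℕ) (htr : r ≤ t) (hr : 3 ≤ r) (ha : 2 * (r - 1) ≤ a)
    (hb : Nat.factorial (a - 1) + 1 ≤ b) (β : ℝ)
    (hβ1 : (r : ℝ) - 1 - ((r : ℝ) - 1) * ((r : ℝ) - 2) / (2 * ((a : ℝ) - 1)) < β)
    (hβ2 : β < (r : ℝ) - 1 - ((r : ℝ) - 1) * ((r : ℝ) - 2) / (2 * (a : ℝ))) :
    ∃ N : ℕ, ∀ n : ℕ, N ≤ n → ∀ (V : Type) (_ : Fintype V), ∀ G : SimpleGraph V,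
      Fintype.card V = n →
      ∀ x : Fin t → V, Function.Injective x →
      (∀ i, (n : ℝ) ^ β / (2 * ((a : ℝ) + (b : ℝ)) * (t : ℝ)) ≤ (cliqueCountOn G r (x i) : ℝ)) →
      (completeBipartiteGraph (Fin a) (Fin b)).ContainsCopy (G.induce ((Set.range x)ᶜ)) →
      (multiCopies (t + 1) (completeBipartiteGraph (Fin a) (Fin b))).ContainsCopy G :=
  stmt13_general t r a b htr hr ha β hβ1
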